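/- The languages L(C) (acceptance from P), L(C from N), and the set W of improperly shaped trees partition the space of trees over {a,b,∨,¬}: every well-shaped tree (t ∉ W) is accepted from exactly one of the states P, N, and no tree in W is accepted from either; the proof is by transfinite induction on the ordinal rank of well-shaped trees. -/

import Mathlib

/-- The alphabet {a, b, ∨, ¬}. -/
inductive A4 | la | lb | lor | lneg
deriving DecidableEq

instance : TopologicalSpace A4 := ⊥
instance : DiscreteTopology A4 := ⟨rfl⟩

/-- Infinite binary trees over {a, b, ∨, ¬}. -/
abbrev Tree4 := List (Fin 2) → A4

/-- The length-`n` prefix of a branch. -/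
def pre (β : ℕ → Fin 2) (n : ℕ) : List (Fin 2) := List.ofFn (fun i : Fin n => β i)

/-- `r` occurs infinitely often in the sequence `g`. -/
def InfOften (g : ℕ → ℕ) (r : ℕ) : Prop := ∀ m, ∃ n ≥ m, g n = r

/-- Parity condition: the maximal value occurring infinitely often is even. -/
def ParityOk (g : ℕ → ℕ) : Prop :=
  ∃ r, Even r ∧ InfOften g r ∧ ∀ r', InfOften g r' → r' ≤ r

/-- States of the unambiguous automaton `C` (including the states of `A_G` and `A_L`). -/
inductive QC
  | P | N | Pv | Nv | Tv | TS | Top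
  | g1 | g2 | top2 | bot1 | l1 | l0 | top0
deriving DecidableEq

def rankC : QC → ℕ
  | .P => 1 | .N => 1 | .Pv => 1 | .TS => 1
  | .Nv => 0 | .Tv => 0 | .Top => 0
  | .g1 => 1 | .g2 => 2 | .top2 => 2 | .bot1 => 1 | .l1 => 1 | .l0 => 0 | .top0 => 0

/-- Transition relation of `C`. -/
def deltaC : QC → A4 → QC → QC → Prop := fun q a q1 q2 =>
  match q, a with
  -- the formula layer
  | .P, .lor | .Pv, .lor => (q1 = .Tv ∧ q2 = .P) ∨ (q1 = .Pv ∧ q2 = .N)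
  | .N, .lor | .Nv, .lor => q1 = .Nv ∧ q2 = .N
  | .Tv, .lor | .TS, .lor => q1 = .Tv ∧ q2 = .TS
  | .P, .lneg => q1 = .Top ∧ q2 = .N
  | .N, .lneg => q1 = .Top ∧ q2 = .P
  | .TS, .lneg => q1 = .Top ∧ q2 = .TS
  | .TS, .la | .TS, .lb => q1 = .Top ∧ q2 = .Top
  | .Top, _ => q1 = .Top ∧ q2 = .Top
  -- on a or b, state P acts as g₁ of A_G, state N acts as l₁ of A_L
  | .P, .la => (q1 = .g2 ∧ q2 = .top2) ∨ (q1 = .l1 ∧ q2 = .g1)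
  | .P, .lb => q1 = .bot1 ∧ q2 = .bot1
  | .N, .la => q1 = .l1 ∧ q2 = .l0
  | .N, .lb => q1 = .top0 ∧ q2 = .top0
  -- the A_G component (letters other than a are treated like b)
  | .g1, .la | .g2, .la => (q1 = .g2 ∧ q2 = .top2) ∨ (q1 = .l1 ∧ q2 = .g1)
  | .g1, _ | .g2, _ => q1 = .bot1 ∧ q2 = .bot1
  -- the A_L component
  | .l1, .la | .l0, .la => q1 = .l1 ∧ q2 = .l0
  | .l1, _ | .l0, _ => q1 = .top0 ∧ q2 = .top0
  | .top2, _ => q1 = .top2 ∧ q2 = .top2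
  | .bot1, _ => q1 = .bot1 ∧ q2 = .bot1
  | .top0, _ => q1 = .top0 ∧ q2 = .top0
  -- no transitions in the remaining cases
  | _, _ => False

/-- A run of `C` on `t` starting in state `q0`. -/
def IsRunC (t : Tree4) (q0 : QC) (ρ : List (Fin 2) → QC) : Prop :=
  ρ [] = q0 ∧ ∀ v : List (Fin 2), deltaC (ρ v) (t v) (ρ (v ++ [0])) (ρ (v ++ [1]))

/-- An accepting run: the parity condition holds on every branch. -/
def AccRunC (t : Tree4) (q0 : QC) (ρ : List (Fin 2) → QC) : Prop :=
  IsRunC t q0 ρ ∧ ∀ β : ℕ → Fin 2, ParityOk (fun n => rankC (ρ (pre β n)))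

/-- `t` is accepted by `C` started in state `q0`. -/
def AcceptsFrom (q0 : QC) (t : Tree4) : Prop := ∃ ρ, AccRunC t q0 ρ

/-- The set `W` of improperly shaped trees. -/
def Wbad : Set Tree4 :=
  {t | (∃ β : ℕ → Fin 2,
          (∀ n, t (pre β n) = A4.lor ∨ t (pre β n) = A4.lneg) ∧
          (∀ m, ∃ n ≥ m, β n = 1) ∧
          (∀ n, t (pre β n) = A4.lneg → β n = 1)) ∨
       (∃ w : List (Fin 2),
          t (w ++ [0]) ≠ A4.lor ∧ t w = A4.lor ∧
          (∀ u, u <+: w → (t u = A4.lor ∨ t u = A4.lneg)) ∧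
          (∀ (u : List (Fin 2)) (d : Fin 2),
            (u ++ [d]) <+: (w ++ [(0 : Fin 2)]) → t u = A4.lneg → d = 1))}

/-!
Outside `W` a tree is a well-founded formula: call `s` a subformula of `t` if `s` hangs off a
formula path of `t` (labels `∨`/`¬`, right after each `¬`) at a right turn. An infinite descending
chain of subformulas would spell out a branch witnessing the first clause of `W`, so well-founded
induction along this relation replaces the transfinite induction on `rank`. At a leaf `a` or `b`
the states `P` and `N` act as the complementary automata `A_G` and `A_L`; at `¬` they swap; at an
`∨`, whose left spine consists of `∨`s, `N` accepts iff `N` accepts every disjunct, and `P` iff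
`P` accepts some disjunct and `N` all earlier ones: a run from `P` that passes `P` to no disjunct
stays in `P`, `Pv` along the spine, where the rank is `1`.

A tree in `W` is rejected from every formula state: along a witness branch the run stays among
formula states of rank at most `1` and has rank `1` after each right turn; along a witness path it
reaches a left child of `∨` in one of `Pv`, `Nv`, `Tv`, which have transitions only on `∨`.
-/

open Filter

theorem exists_not_and_forall_lt_iff {p : ℕ → Prop} :
    (∃ k, ¬ p k ∧ ∀ j < k, p j) ↔ ¬ ∀ k, p k := by
  classical
  refine ⟨fun ⟨k, hk, _⟩ h => hk (h k), fun h => ?_⟩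
  push Not at h
  exact ⟨Nat.find h, Nat.find_spec h, fun j hj => not_not.1 (Nat.find_min h hj)⟩

/-! ### Branches -/

theorem pre_succ (β : ℕ → Fin 2) (n : ℕ) : pre β (n + 1) = pre β n ++ [β n] := by
  rw [pre, List.ofFn_succ', List.concat_eq_append]; rfl

theorem pre_succ' (β : ℕ → Fin 2) (n : ℕ) : pre β (n + 1) = β 0 :: pre (fun i => β (i + 1)) n := by
  rw [pre, List.ofFn_succ]; rfl

theorem length_pre (β : ℕ → Fin 2) (n : ℕ) : (pre β n).length = n := by
  simp [pre]

theorem getElem_pre (β : ℕ → Fin 2) {n i : ℕ} (h : i < (pre β n).length) : (pre β n)[i] = β i := by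
  simp [pre]

theorem pre_add (β : ℕ → Fin 2) (m n : ℕ) :
    pre β (m + n) = pre β m ++ pre (fun i => β (m + i)) n := by
  induction n with
  | zero => simp [pre]
  | succ n ih => rw [← add_assoc, pre_succ, ih, pre_succ, List.append_assoc]

theorem pre_prefix_pre (β : ℕ → Fin 2) {m n : ℕ} (h : m ≤ n) : pre β m <+: pre β n := by
  obtain ⟨k, rfl⟩ := Nat.exists_eq_add_of_le h
  rw [pre_add]
  exact List.prefix_append _ _

def prependBranch (w : List (Fin 2)) (β : ℕ → Fin 2) (n : ℕ) : Fin 2 :=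
  if h : n < w.length then w[n] else β (n - w.length)

theorem pre_prependBranch (w : List (Fin 2)) (β : ℕ → Fin 2) (n : ℕ) :
    pre (prependBranch w β) (w.length + n) = w ++ pre β n := by
  refine List.ext_getElem (by simp [length_pre]) fun i h _ => ?_
  rw [getElem_pre, List.getElem_append, prependBranch]
  split_ifs <;> simp [getElem_pre]

theorem pre_congr {β γ : ℕ → Fin 2} {n : ℕ} (h : ∀ i < n, β i = γ i) : pre β n = pre γ n := by
  simp only [pre, List.ofFn_inj]
  exact funext fun i => h i i.isLt

theorem pre_const (d : Fin 2) (n : ℕ) : pre (fun _ => d) n = List.replicate n d := by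
  simp [pre]

theorem exists_pre_eq_or_deviation (γ : ℕ → Fin 2) (v : List (Fin 2)) :
    (∃ m, v = pre γ m) ∨ ∃ m d u, d ≠ γ m ∧ v = pre γ m ++ d :: u := by
  induction v using List.reverseRecOn with
  | nil => exact .inl ⟨0, rfl⟩
  | append_singleton v e ih =>
    rcases ih with ⟨m, rfl⟩ | ⟨m, d, u, hd, rfl⟩
    · by_cases he : e = γ m
      · exact .inl ⟨m + 1, by rw [pre_succ, he]⟩
      · exact .inr ⟨m, e, [], he, rfl⟩
    · exact .inr ⟨m, d, u ++ [e], hd, by simp⟩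

theorem eq_or_exists_deviation (β γ : ℕ → Fin 2) :
    β = γ ∨ ∃ m, β m ≠ γ m ∧
      ∀ n, pre β (n + (m + 1)) = pre γ m ++ β m :: pre (fun i => β (m + 1 + i)) n := by
  classical
  by_cases h : ∃ i, β i ≠ γ i
  · refine .inr ⟨Nat.find h, Nat.find_spec h, fun n => ?_⟩
    rw [add_comm, pre_add, pre_succ, pre_congr fun i hi => not_not.1 (Nat.find_min h hi)]
    simp
  · push Not at h
    exact .inl (funext h)

def branchSeq (next : List (Fin 2) → Fin 2) : ℕ → List (Fin 2)
  | 0 => []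
  | k + 1 => branchSeq next k ++ [next (branchSeq next k)]

def branchOf (next : List (Fin 2) → Fin 2) (k : ℕ) : Fin 2 := next (branchSeq next k)

theorem branchOf_eq (next : List (Fin 2) → Fin 2) (k : ℕ) :
    branchOf next k = next (pre (branchOf next) k) := by
  suffices pre (branchOf next) k = branchSeq next k by rw [this]; rfl
  induction k with
  | zero => rfl
  | succ k ih => rw [pre_succ, ih]; rfl

theorem exists_pre_eq_of_prefix_chain {p : ℕ → List (Fin 2)} (hp : ∀ n, p n <+: p (n + 1))
    (hlen : ∀ n, n ≤ (p n).length) : ∃ β : ℕ → Fin 2, ∀ n, pre β (p n).length = p n := by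
  have hmono {m n : ℕ} (h : m ≤ n) : p m <+: p n := by
    induction n, h using Nat.le_induction with
    | base => exact List.prefix_refl _
    | succ n _ ih => exact ih.trans (hp n)
  refine ⟨fun i => (p (i + 1)).getD i 0, fun n =>
    List.ext_getElem (length_pre _ _) fun i h₁ h₂ => ?_⟩
  rw [getElem_pre, List.getD_eq_getElem _ _ (by have := hlen (i + 1); omega)]
  rcases le_total n (i + 1) with h | h
  · exact ((hmono h).getElem h₂).symm
  · exact (hmono h).getElem _

/-! ### Parity conditions -/

theorem infOften_iff_frequently {g : ℕ → ℕ} {r : ℕ} : InfOften g r ↔ ∃ᶠ n in atTop, g n = r :=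
  frequently_atTop.symm

theorem frequently_atTop_add_iff {p : ℕ → Prop} (k : ℕ) :
    (∃ᶠ n in atTop, p (n + k)) ↔ ∃ᶠ n in atTop, p n := by
  rw [← frequently_map (m := (· + k)), map_add_atTop_eq_nat]

theorem eventually_atTop_add_iff {p : ℕ → Prop} (k : ℕ) :
    (∀ᶠ n in atTop, p (n + k)) ↔ ∀ᶠ n in atTop, p n := by
  rw [← eventually_map (m := (· + k)), map_add_atTop_eq_nat]

theorem eventually_eq_of_absorbing {α : Type*} {q : ℕ → α} {a : α}
    (ha : ∀ n, q n = a → q (n + 1) = a) {m : ℕ} (hm : q m = a) : ∀ᶠ n in atTop, q n = a :=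
  eventually_atTop.2 ⟨m, fun n hn => Nat.le_induction hm (fun n _ => ha n) n hn⟩

theorem parityOk_comp_add_iff (g : ℕ → ℕ) (k : ℕ) :
    ParityOk (fun n => g (n + k)) ↔ ParityOk g := by
  have h (r : ℕ) : (∃ᶠ n in atTop, g (n + k) = r) ↔ ∃ᶠ n in atTop, g n = r :=
    frequently_atTop_add_iff (p := (g · = r)) k
  simp only [ParityOk, infOften_iff_frequently, h]

theorem ParityOk.even_of_eventually_eq {g : ℕ → ℕ} {r : ℕ} (hg : ParityOk g)
    (h : ∀ᶠ n in atTop, g n = r) : Even r := by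
  obtain ⟨s, hs, hfreq, -⟩ := hg
  obtain ⟨n, hs', hr⟩ := ((infOften_iff_frequently.1 hfreq).and_eventually h).exists
  rwa [← hr, hs']

theorem parityOk_of_frequently_of_eventually_le {g : ℕ → ℕ} {r : ℕ} (he : Even r)
    (hf : ∃ᶠ n in atTop, g n = r) (hle : ∀ᶠ n in atTop, g n ≤ r) : ParityOk g := by
  refine ⟨r, he, infOften_iff_frequently.2 hf, fun r' h' => ?_⟩
  obtain ⟨n, hn, hle⟩ := ((infOften_iff_frequently.1 h').and_eventually hle).exists
  exact hn ▸ hle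

theorem parityOk_iff_eventually_eq_zero {g : ℕ → ℕ} (hle : ∀ n, g n ≤ 1) :
    ParityOk g ↔ ∀ᶠ n in atTop, g n = 0 := by
  constructor
  · rintro ⟨r, hr, hfreq, hmax⟩
    obtain ⟨n, -, hn⟩ := hfreq 0
    have hr0 : r = 0 := by
      have := hle n
      rcases Nat.le_one_iff_eq_zero_or_eq_one.1 (hn ▸ this) with h | rfl
      · exact h
      · exact absurd hr (by decide)
    have h1 : ¬ InfOften g 1 := fun h => by simpa [hr0] using hmax 1 h
    simp only [infOften_iff_frequently, not_frequently] at h1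
    filter_upwards [h1] with n hn using by have := hle n; omega
  · intro h
    exact parityOk_of_frequently_of_eventually_le .zero h.frequently (h.mono fun _ => le_of_eq)

/-! ### Runs -/

def subtree (t : Tree4) (w : List (Fin 2)) : Tree4 := fun u => t (w ++ u)

@[simp] theorem subtree_apply (t : Tree4) (w u : List (Fin 2)) : subtree t w u = t (w ++ u) := rfl

@[simp] theorem subtree_subtree (t : Tree4) (u v : List (Fin 2)) :
    subtree (subtree t u) v = subtree t (u ++ v) := by
  funext x
  simp

theorem AccRunC.restrict {t : Tree4} {q : QC} {ρ : List (Fin 2) → QC} (h : AccRunC t q ρ)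
    (w : List (Fin 2)) : AccRunC (subtree t w) (ρ w) (fun u => ρ (w ++ u)) := by
  obtain ⟨⟨-, hstep⟩, hpar⟩ := h
  refine ⟨⟨by simp, fun v => by simpa using hstep (w ++ v)⟩, fun β => ?_⟩
  have := (parityOk_comp_add_iff _ w.length).2 (hpar (prependBranch w β))
  simpa only [add_comm _ w.length, pre_prependBranch] using this

theorem AccRunC.acceptsFrom_subtree {t : Tree4} {q : QC} {ρ : List (Fin 2) → QC}
    (h : AccRunC t q ρ) (w : List (Fin 2)) : AcceptsFrom (ρ w) (subtree t w) :=
  ⟨_, h.restrict w⟩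

theorem acceptsFrom_iff {q : QC} {t : Tree4} :
    AcceptsFrom q t ↔ ∃ q₀ q₁, deltaC q (t []) q₀ q₁ ∧
      AcceptsFrom q₀ (subtree t [0]) ∧ AcceptsFrom q₁ (subtree t [1]) := by
  constructor
  · rintro ⟨ρ, hρ⟩
    refine ⟨ρ [0], ρ [1], ?_, hρ.acceptsFrom_subtree [0], hρ.acceptsFrom_subtree [1]⟩
    simpa [hρ.1.1] using hρ.1.2 []
  · rintro ⟨q₀, q₁, hδ, ⟨ρ₀, ⟨h₀, hs₀⟩, hp₀⟩, ⟨ρ₁, ⟨h₁, hs₁⟩, hp₁⟩⟩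
    let ρ : List (Fin 2) → QC
      | [] => q
      | d :: u => ![ρ₀, ρ₁] d u
    refine ⟨ρ, ⟨rfl, ?_⟩, fun β => ?_⟩
    · rintro (_ | ⟨d, u⟩)
      · simpa [ρ, h₀, h₁] using hδ
      · fin_cases d
        · simpa [ρ] using hs₀ u
        · simpa [ρ] using hs₁ u
    · rw [← parityOk_comp_add_iff _ 1]
      simp only [pre_succ']
      generalize β 0 = d
      fin_cases d
      · exact hp₀ _
      · exact hp₁ _

theorem acceptsFrom_congr {q q' : QC} {t : Tree4}
    (h : ∀ q₀ q₁, deltaC q (t []) q₀ q₁ ↔ deltaC q' (t []) q₀ q₁) :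
    AcceptsFrom q t ↔ AcceptsFrom q' t := by
  rw [acceptsFrom_iff, acceptsFrom_iff]
  simp only [h]

theorem acceptsFrom_of_loop {q : QC} (he : Even (rankC q)) (hq : ∀ a, deltaC q a q q)
    (t : Tree4) : AcceptsFrom q t :=
  ⟨fun _ => q, ⟨rfl, fun _ => hq _⟩, fun _ => parityOk_of_frequently_of_eventually_le he
    (.of_forall fun _ => rfl) (.of_forall fun _ => le_rfl)⟩

theorem acceptsFrom_Top (t : Tree4) : AcceptsFrom .Top t :=
  acceptsFrom_of_loop .zero (fun a => by cases a <;> exact ⟨rfl, rfl⟩) t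

theorem acceptsFrom_top0 (t : Tree4) : AcceptsFrom .top0 t :=
  acceptsFrom_of_loop .zero (fun a => by cases a <;> exact ⟨rfl, rfl⟩) t

theorem acceptsFrom_top2 (t : Tree4) : AcceptsFrom .top2 t :=
  acceptsFrom_of_loop (by decide) (fun a => by cases a <;> exact ⟨rfl, rfl⟩) t

theorem not_acceptsFrom_bot1 (t : Tree4) : ¬ AcceptsFrom .bot1 t := by
  rintro ⟨ρ, ⟨h₀, hstep⟩, hpar⟩
  have hρ : ∀ v, ρ v = .bot1 := by
    intro v
    induction v using List.reverseRecOn with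
    | nil => exact h₀
    | append_singleton v d ih =>
      have hδ := hstep v
      rw [ih] at hδ
      have hδ' : ρ (v ++ [0]) = .bot1 ∧ ρ (v ++ [1]) = .bot1 := by
        cases t v <;> exact hδ
      fin_cases d
      exacts [hδ'.1, hδ'.2]
  have := (hpar fun _ => 0).even_of_eventually_eq (.of_forall fun n => by simp only [hρ]; rfl)
  exact absurd this (by decide)

theorem AccRunC.ne_bot1 {t : Tree4} {q : QC} {ρ : List (Fin 2) → QC} (h : AccRunC t q ρ)
    (v : List (Fin 2)) : ρ v ≠ .bot1 :=
  fun hv => not_acceptsFrom_bot1 _ (hv ▸ h.acceptsFrom_subtree v)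

def detRun (next : QC → A4 → Fin 2 → QC) : Tree4 → QC → List (Fin 2) → QC
  | _, q, [] => q
  | t, q, d :: u => detRun next (subtree t [d]) (next q (t []) d) u

theorem detRun_append_singleton (next : QC → A4 → Fin 2 → QC) (t : Tree4) (q : QC)
    (v : List (Fin 2)) (d : Fin 2) :
    detRun next t q (v ++ [d]) = next (detRun next t q v) (t v) d := by
  induction v generalizing t q with
  | nil => rfl
  | cons e v ih => exact ih _ _

def glueRun (γ : ℕ → Fin 2) (F : ℕ → QC) (R : ℕ → Fin 2 → List (Fin 2) → QC) :
    ℕ → List (Fin 2) → QC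
  | k, [] => F k
  | k, d :: u => if d = γ k then glueRun γ F R (k + 1) u else R k d u

theorem glueRun_pre_append (γ : ℕ → Fin 2) (F : ℕ → QC) (R : ℕ → Fin 2 → List (Fin 2) → QC)
    (m : ℕ) (u : List (Fin 2)) : glueRun γ F R 0 (pre γ m ++ u) = glueRun γ F R m u := by
  suffices ∀ k, glueRun γ F R k (pre (fun i => γ (k + i)) m ++ u) = glueRun γ F R (k + m) u by
    simpa using this 0
  induction m with
  | zero => simp [pre]
  | succ m ih =>
    intro k
    have hshift : (fun i => γ (k + (i + 1))) = fun i => γ (k + 1 + i) := by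
      funext i
      rw [add_comm i, add_assoc]
    rw [pre_succ', List.cons_append, glueRun, Nat.add_zero, if_pos rfl, hshift, ih,
      add_right_comm, add_assoc]

theorem acceptsFrom_of_branch {t : Tree4} (γ : ℕ → Fin 2) (F : ℕ → QC) (c : ℕ → Fin 2 → QC)
    (hδ : ∀ k, deltaC (F k) (t (pre γ k)) (c k 0) (c k 1))
    (hnext : ∀ k, c k (γ k) = F (k + 1))
    (hoff : ∀ k d, d ≠ γ k → AcceptsFrom (c k d) (subtree t (pre γ k ++ [d])))
    (hpar : ParityOk fun k => rankC (F k)) : AcceptsFrom (F 0) t := by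
  have hR : ∀ k d, ∃ ρ, d ≠ γ k → AccRunC (subtree t (pre γ k ++ [d])) (c k d) ρ := by
    intro k d
    by_cases hd : d = γ k
    · exact ⟨fun _ => F 0, fun h => (h hd).elim⟩
    · obtain ⟨ρ, hρ⟩ := hoff k d hd
      exact ⟨ρ, fun _ => hρ⟩
  choose R hR using hR
  have on_branch (m : ℕ) : glueRun γ F R 0 (pre γ m) = F m := by
    simpa [glueRun] using glueRun_pre_append γ F R m []
  have off_branch {m d} (hd : d ≠ γ m) (u : List (Fin 2)) :
      glueRun γ F R 0 (pre γ m ++ d :: u) = R m d u := by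
    rw [glueRun_pre_append, glueRun, if_neg hd]
  have child (m : ℕ) (d : Fin 2) : glueRun γ F R 0 (pre γ m ++ [d]) = c m d := by
    by_cases hd : d = γ m
    · rw [hd, hnext, ← on_branch (m + 1), pre_succ]
    · rw [off_branch hd, (hR m d hd).1.1]
  refine ⟨glueRun γ F R 0, ⟨on_branch 0, fun v => ?_⟩, fun β => ?_⟩
  · rcases exists_pre_eq_or_deviation γ v with ⟨m, rfl⟩ | ⟨m, d, u, hd, rfl⟩
    · rw [on_branch, child, child]
      exact hδ m
    · simp only [List.append_assoc, List.cons_append, off_branch hd]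
      simpa using (hR m d hd).1.2 u
  · rcases eq_or_exists_deviation β γ with rfl | ⟨m, hm, hβ⟩
    · simpa only [on_branch] using hpar
    · rw [← parityOk_comp_add_iff _ (m + 1)]
      simpa only [hβ, off_branch hm] using (hR m (β m) hm).2 _

/-! ### The automata `A_L` and `A_G` -/

def InG (t : Tree4) : Prop :=
  ∃ β : ℕ → Fin 2, (∀ n, t (pre β n) = .la) ∧ ∃ᶠ n in atTop, β n = 0

theorem InG.root_eq_la {t : Tree4} (h : InG t) : t [] = .la :=
  let ⟨_, hl, _⟩ := h
  hl 0

theorem inG_subtree_pre {t : Tree4} {β : ℕ → Fin 2} (hl : ∀ n, t (pre β n) = .la)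
    (hf : ∃ᶠ n in atTop, β n = 0) (j : ℕ) : InG (subtree t (pre β j)) := by
  refine ⟨fun i => β (j + i), fun n => by simpa [← pre_add] using hl (j + n), ?_⟩
  simpa only [add_comm j] using (frequently_atTop_add_iff (p := (β · = 0)) j).2 hf

theorem InG.subtree_one {t : Tree4} (h : InG t) (h₀ : ¬ InG (subtree t [0])) :
    InG (subtree t [1]) := by
  obtain ⟨β, hl, hf⟩ := h
  have h₁ := inG_subtree_pre hl hf 1
  rw [pre_succ' β 0] at h₁
  rcases Fin.exists_fin_two.1 ⟨β 0, rfl⟩ with h | h <;> rw [h] at h₁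
  · exact absurd h₁ h₀
  · exact h₁

def nextL : QC → A4 → Fin 2 → QC
  | .l1, .la, d | .l0, .la, d => if d = 0 then .l1 else .l0
  | _, _, _ => .top0

theorem nextL_top0 (a : A4) (d : Fin 2) : nextL .top0 a d = .top0 := by
  cases a <;> rfl

theorem nextL_of_ne_la {q : QC} {a : A4} (ha : a ≠ .la) (d : Fin 2) : nextL q a d = .top0 := by
  cases q <;> cases a <;> simp_all [nextL]

def lStates : Set QC := {.l1, .l0, .top0}

theorem nextL_mem (q : QC) (a : A4) (d : Fin 2) : nextL q a d ∈ lStates := by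
  cases q <;> cases a <;> fin_cases d <;> simp [nextL, lStates]

theorem deltaC_iff_nextL {q : QC} (hq : q ∈ lStates) (a : A4) (q₀ q₁ : QC) :
    deltaC q a q₀ q₁ ↔ q₀ = nextL q a 0 ∧ q₁ = nextL q a 1 := by
  simp only [lStates, Set.mem_insert_iff, Set.mem_singleton_iff] at hq
  rcases hq with rfl | rfl | rfl <;> cases a <;> simp [deltaC, nextL]

theorem rankC_le_one_of_mem_lStates {q : QC} (hq : q ∈ lStates) : rankC q ≤ 1 := by
  simp only [lStates, Set.mem_insert_iff, Set.mem_singleton_iff] at hq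
  rcases hq with rfl | rfl | rfl <;> decide

theorem detRun_nextL_mem (t : Tree4) (v : List (Fin 2)) : detRun nextL t .l1 v ∈ lStates := by
  rcases List.eq_nil_or_concat v with rfl | ⟨u, d, rfl⟩
  · simp [detRun, lStates]
  · rw [List.concat_eq_append, detRun_append_singleton]
    exact nextL_mem _ _ _

theorem IsRunC.eq_detRun_nextL {t : Tree4} {ρ : List (Fin 2) → QC} (h : IsRunC t .l1 ρ) :
    ρ = detRun nextL t .l1 := by
  funext v
  induction v using List.reverseRecOn with
  | nil => exact h.1
  | append_singleton v d ih =>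
    have hδ := (deltaC_iff_nextL (ih ▸ detRun_nextL_mem t v) _ _ _).1 (h.2 v)
    rw [detRun_append_singleton, ← ih]
    fin_cases d
    exacts [hδ.1, hδ.2]

theorem acceptsFrom_l1_iff_forall_parityOk {t : Tree4} : AcceptsFrom .l1 t ↔
    ∀ β, ParityOk fun n => rankC (detRun nextL t .l1 (pre β n)) := by
  constructor
  · rintro ⟨ρ, hρ, hpar⟩
    exact hρ.eq_detRun_nextL ▸ hpar
  · refine fun hpar => ⟨_, ⟨rfl, fun v => ?_⟩, hpar⟩
    rw [detRun_append_singleton, detRun_append_singleton]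
    exact (deltaC_iff_nextL (detRun_nextL_mem t v) _ _ _).2 ⟨rfl, rfl⟩

theorem parityOk_detRun_nextL_iff (t : Tree4) (β : ℕ → Fin 2) :
    (ParityOk fun n => rankC (detRun nextL t .l1 (pre β n))) ↔
      ¬ ((∀ n, t (pre β n) = .la) ∧ ∃ᶠ n in atTop, β n = 0) := by
  set q : ℕ → QC := fun n => detRun nextL t .l1 (pre β n)
  have hq (n : ℕ) : q (n + 1) = nextL (q n) (t (pre β n)) (β n) := by
    simp only [q, pre_succ, detRun_append_singleton]
  rw [parityOk_iff_eventually_eq_zero fun n => rankC_le_one_of_mem_lStates (detRun_nextL_mem _ _),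
    ← eventually_atTop_add_iff 1]
  change (∀ᶠ n in atTop, rankC (q (n + 1)) = 0) ↔ _
  by_cases hl : ∀ n, t (pre β n) = .la
  · have hnext (n : ℕ) : q (n + 1) = if β n = 0 then .l1 else .l0 := by
      induction n with
      | zero => rw [hq, hl]; rfl
      | succ n ih => rw [hq, hl, ih]; split_ifs <;> simp [nextL, *]
    have hrank (n : ℕ) : rankC (q (n + 1)) = 0 ↔ β n ≠ 0 := by
      rw [hnext]
      split_ifs <;> simp [rankC, *]
    simp only [hrank, hl, implies_true, true_and, not_frequently]
  · push Not at hl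
    obtain ⟨m, hm⟩ := hl
    have hev : ∀ᶠ n in atTop, q n = .top0 :=
      eventually_eq_of_absorbing (fun n h => by rw [hq, h, nextL_top0]) (m := m + 1)
        (by rw [hq, nextL_of_ne_la hm])
    simp only [show ¬ ∀ n, t (pre β n) = .la from fun h => hm (h m), false_and,
      not_false_eq_true, iff_true]
    exact (eventually_atTop_add_iff (p := fun n => rankC (q n) = 0) 1).2
      (hev.mono fun n h => by rw [h]; rfl)

theorem acceptsFrom_l1_iff {t : Tree4} : AcceptsFrom .l1 t ↔ ¬ InG t := by
  simp only [acceptsFrom_l1_iff_forall_parityOk, parityOk_detRun_nextL_iff, InG, not_exists]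

theorem deltaC_g_iff {q : QC} (hq : q = .g1 ∨ q = .g2) (a : A4) (q₀ q₁ : QC) :
    deltaC q a q₀ q₁ ↔ (a = .la ∧ (q₀ = .g2 ∧ q₁ = .top2 ∨ q₀ = .l1 ∧ q₁ = .g1)) ∨
      (a ≠ .la ∧ q₀ = .bot1 ∧ q₁ = .bot1) := by
  rcases hq with rfl | rfl <;> cases a <;> simp [deltaC]

theorem inG_of_acceptsFrom_g1 {t : Tree4} (h : AcceptsFrom .g1 t) : InG t := by
  classical
  obtain ⟨ρ, hρ⟩ := h
  set γ := branchOf fun v => if ρ (v ++ [0]) = .g2 then 0 else 1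
  have hstep (n : ℕ) (hn : ρ (pre γ n) = .g1 ∨ ρ (pre γ n) = .g2) :
      t (pre γ n) = .la ∧ ρ (pre γ (n + 1)) = if γ n = 0 then .g2 else .g1 := by
    have hγ : γ n = if ρ (pre γ n ++ [0]) = .g2 then 0 else 1 := branchOf_eq _ n
    rw [pre_succ]
    rcases (deltaC_g_iff hn _ _ _).1 (hρ.1.2 (pre γ n)) with ⟨hla, ⟨h₀, -⟩ | ⟨h₀, h₁⟩⟩ | ⟨-, h₀, -⟩
    · simp [hla, hγ, h₀]
    · simp [hla, hγ, h₀, h₁]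
    · exact absurd h₀ (hρ.ne_bot1 _)
  have hg (n : ℕ) : ρ (pre γ n) = .g1 ∨ ρ (pre γ n) = .g2 := by
    induction n with
    | zero => exact .inl hρ.1.1
    | succ n ih => rw [(hstep n ih).2]; split_ifs <;> simp
  refine ⟨γ, fun n => (hstep n (hg n)).1, ?_⟩
  by_contra hf
  rw [not_frequently] at hf
  have hev : ∀ᶠ n in atTop, rankC (ρ (pre γ n)) = 1 :=
    (eventually_atTop_add_iff (p := fun n => rankC (ρ (pre γ n)) = 1) 1).1
      (hf.mono fun n hn => by rw [(hstep n (hg n)).2, if_neg hn]; rfl)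
  exact absurd ((hρ.2 γ).even_of_eventually_eq hev) (by decide)

theorem acceptsFrom_g1_of_inG {t : Tree4} (h : InG t) : AcceptsFrom .g1 t := by
  classical
  set γ := branchOf fun v => if InG (subtree t (v ++ [0])) then 0 else 1
  have hγ (k : ℕ) : γ k = if InG (subtree t (pre γ k ++ [0])) then 0 else 1 := branchOf_eq _ k
  have hG (k : ℕ) : InG (subtree t (pre γ k)) := by
    induction k with
    | zero => exact h
    | succ k ih =>
      rw [pre_succ, hγ]
      split_ifs with h₀
      · exact h₀
      · simpa using ih.subtree_one (by simpa using h₀)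
  -- If `γ` turned right from `m` on, it would have taken the first left turn of a witness
  -- for `InG (subtree t (pre γ m))`.
  have hinf : ∃ᶠ k in atTop, γ k = 0 := by
    rw [frequently_atTop]
    intro m
    by_contra! hm
    obtain ⟨β, hl, hf⟩ := hG m
    have hex : ∃ j, β j = 0 := hf.exists
    set j := Nat.find hex
    have hpre : pre γ (m + j) = pre γ m ++ pre β j := by
      rw [pre_add]
      congr 1
      refine pre_congr fun i hi => ?_
      rw [Fin.eq_one_of_ne_zero _ (hm _ (Nat.le_add_right m i)),
        Fin.eq_one_of_ne_zero _ (Nat.find_min hex hi)]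
    have hj := inG_subtree_pre hl hf (j + 1)
    rw [pre_succ, Nat.find_spec hex, subtree_subtree, ← List.append_assoc, ← hpre] at hj
    exact hm (m + j) (Nat.le_add_right m j) (by rw [hγ, if_pos hj])
  let c (k : ℕ) : Fin 2 → QC := if γ k = 0 then ![.g2, .top2] else ![.l1, .g1]
  let F : ℕ → QC
    | 0 => .g1
    | k + 1 => c k (γ k)
  have hF (k : ℕ) : F k = .g1 ∨ F k = .g2 := by
    cases k with
    | zero => exact .inl rfl
    | succ k => rcases Fin.exists_fin_two.1 ⟨γ k, rfl⟩ with h | h <;> simp [F, c, h]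
  refine acceptsFrom_of_branch (F := F) γ c (fun k => ?_) (fun k => rfl) (fun k d hd => ?_) ?_
  · have hla : t (pre γ k) = .la := by simpa using (hG k).root_eq_la
    rw [deltaC_g_iff (hF k), hla]
    simp only [c]
    split_ifs <;> simp
  · simp only [c]
    split_ifs with h₀
    · rw [h₀] at hd
      rw [Fin.eq_one_of_ne_zero d hd]
      exact acceptsFrom_top2 _
    · rw [Fin.eq_one_of_ne_zero _ h₀] at hd
      rw [show d = 0 by omega]
      refine acceptsFrom_l1_iff.2 fun hG₀ => h₀ ?_
      rw [hγ, if_pos hG₀]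
  · refine parityOk_of_frequently_of_eventually_le (r := 2) (by decide) ?_
      (.of_forall fun k => by rcases hF k with h | h <;> rw [h] <;> decide)
    refine (frequently_atTop_add_iff (p := fun k => rankC (F k) = 2) 1).1 (hinf.mono fun k hk => ?_)
    simp [F, c, hk, rankC]

theorem acceptsFrom_g1_iff {t : Tree4} : AcceptsFrom .g1 t ↔ InG t :=
  ⟨inG_of_acceptsFrom_g1, acceptsFrom_g1_of_inG⟩

/-! ### Formula paths and the set `W` -/

def IsFormulaPath (t : Tree4) (v : List (Fin 2)) : Prop :=
  ∀ u d, u ++ [d] <+: v → (t u = .lor ∨ t u = .lneg) ∧ (t u = .lneg → d = 1)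

theorem isFormulaPath_nil (t : Tree4) : IsFormulaPath t [] :=
  fun _ _ h => absurd h.length_le (by simp)

theorem IsFormulaPath.of_prefix {t : Tree4} {u v : List (Fin 2)} (h : IsFormulaPath t v)
    (hu : u <+: v) : IsFormulaPath t u :=
  fun w d hw => h w d (hw.trans hu)

theorem isFormulaPath_append_singleton {t : Tree4} {v : List (Fin 2)} {d : Fin 2} :
    IsFormulaPath t (v ++ [d]) ↔
      IsFormulaPath t v ∧ (t v = .lor ∨ t v = .lneg) ∧ (t v = .lneg → d = 1) := by
  refine ⟨fun h => ⟨h.of_prefix (List.prefix_append _ _), h v d (List.prefix_refl _)⟩, ?_⟩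
  rintro ⟨h, hv⟩ u e hu
  rcases List.prefix_concat_iff.1 hu with hu | hu
  · obtain ⟨rfl, he⟩ := List.append_inj' hu rfl
    obtain rfl : e = d := by simpa using he
    exact hv
  · exact h u e hu

theorem IsFormulaPath.append_of_lor {t : Tree4} {v : List (Fin 2)} (h : IsFormulaPath t v)
    (hl : t v = .lor) (d : Fin 2) : IsFormulaPath t (v ++ [d]) :=
  isFormulaPath_append_singleton.2 ⟨h, .inl hl, by simp [hl]⟩

theorem isFormulaPath_append {t : Tree4} {w v : List (Fin 2)} :
    IsFormulaPath t (w ++ v) ↔ IsFormulaPath t w ∧ IsFormulaPath (subtree t w) v := by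
  induction v using List.reverseRecOn with
  | nil => simp [isFormulaPath_nil]
  | append_singleton v d ih =>
    rw [← List.append_assoc, isFormulaPath_append_singleton, isFormulaPath_append_singleton, ih]
    simp [and_assoc]

theorem forall_isFormulaPath_pre_iff {t : Tree4} {β : ℕ → Fin 2} :
    (∀ n, IsFormulaPath t (pre β n)) ↔
      ∀ n, (t (pre β n) = .lor ∨ t (pre β n) = .lneg) ∧ (t (pre β n) = .lneg → β n = 1) := by
  refine ⟨fun h n => ((pre_succ β n) ▸ h (n + 1) |> isFormulaPath_append_singleton.1).2,
    fun h n => ?_⟩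
  induction n with
  | zero => exact isFormulaPath_nil t
  | succ n ih => rw [pre_succ]; exact isFormulaPath_append_singleton.2 ⟨ih, h n⟩

theorem prefix_iff_exists_append_singleton_prefix {u w : List (Fin 2)} (e : Fin 2) :
    u <+: w ↔ ∃ d, u ++ [d] <+: w ++ [e] := by
  constructor
  · rintro ⟨_ | ⟨d, r⟩, rfl⟩
    · exact ⟨e, by simp⟩
    · exact ⟨d, by simp⟩
  · rintro ⟨d, h⟩
    rcases List.prefix_concat_iff.1 h with h | h
    · exact (List.append_inj' h rfl).1 ▸ List.prefix_refl _
    · exact (List.prefix_append _ _).trans h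

theorem mem_Wbad_iff {t : Tree4} : t ∈ Wbad ↔
    (∃ β : ℕ → Fin 2, (∀ n, IsFormulaPath t (pre β n)) ∧ ∃ᶠ n in atTop, β n = 1) ∨
      ∃ w, IsFormulaPath t (w ++ [0]) ∧ t w = .lor ∧ t (w ++ [0]) ≠ .lor := by
  have hw (w : List (Fin 2)) : IsFormulaPath t (w ++ [0]) ↔
      (∀ u, u <+: w → t u = .lor ∨ t u = .lneg) ∧
        ∀ u d, u ++ [d] <+: w ++ [0] → t u = .lneg → d = 1 := by
    refine ⟨fun h => ⟨fun u hu => ?_, fun u d hd => (h u d hd).2⟩,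
      fun h u d hd => ⟨h.1 u ((prefix_iff_exists_append_singleton_prefix 0).2 ⟨d, hd⟩), h.2 u d hd⟩⟩
    obtain ⟨d, hd⟩ := (prefix_iff_exists_append_singleton_prefix 0).1 hu
    exact (h u d hd).1
  simp only [Wbad, Set.mem_ofPred_eq, forall_isFormulaPath_pre_iff, forall_and, hw,
    frequently_atTop]
  constructor
  · rintro (⟨β, h₁, h₂, h₃⟩ | ⟨w, h₁, h₂, h₃, h₄⟩)
    exacts [.inl ⟨β, ⟨h₁, h₃⟩, h₂⟩, .inr ⟨w, ⟨h₃, h₄⟩, h₂, h₁⟩]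
  · rintro (⟨β, ⟨h₁, h₃⟩, h₂⟩ | ⟨w, ⟨h₃, h₄⟩, h₂, h₁⟩)
    exacts [.inl ⟨β, h₁, h₂, h₃⟩, .inr ⟨w, h₁, h₂, h₃, h₄⟩]

theorem mem_Wbad_of_subtree {t : Tree4} {w : List (Fin 2)} (hw : IsFormulaPath t w)
    (h : subtree t w ∈ Wbad) : t ∈ Wbad := by
  rw [mem_Wbad_iff] at h ⊢
  rcases h with ⟨β, hβ, hf⟩ | ⟨u, hu, hl, hne⟩
  · refine .inl ⟨prependBranch w β, fun n => ?_, ?_⟩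
    · refine IsFormulaPath.of_prefix ?_ (pre_prefix_pre _ (Nat.le_add_left n w.length))
      rw [pre_prependBranch]
      exact isFormulaPath_append.2 ⟨hw, hβ n⟩
    · refine (frequently_atTop_add_iff (p := (prependBranch w β · = 1)) w.length).1 ?_
      simpa [prependBranch] using hf
  · refine .inr ⟨w ++ u, ?_, by simpa using hl, by simpa using hne⟩
    rw [List.append_assoc]
    exact isFormulaPath_append.2 ⟨hw, hu⟩

theorem left_eq_lor_of_not_mem_Wbad {t : Tree4} (ht : t ∉ Wbad) {w : List (Fin 2)}
    (hw : IsFormulaPath t w) (hl : t w = .lor) : t (w ++ [0]) = .lor := by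
  by_contra hne
  exact ht (mem_Wbad_iff.2 (.inr ⟨w, hw.append_of_lor hl 0, hl, hne⟩))

theorem lor_spine_of_not_mem_Wbad {t : Tree4} (ht : t ∉ Wbad) (hroot : t [] = .lor) (k : ℕ) :
    IsFormulaPath t (List.replicate k 0) ∧ t (List.replicate k 0) = .lor := by
  induction k with
  | zero => exact ⟨isFormulaPath_nil t, hroot⟩
  | succ k ih =>
    rw [List.replicate_succ']
    exact ⟨ih.1.append_of_lor ih.2 0, left_eq_lor_of_not_mem_Wbad ht ih.1 ih.2⟩

theorem subtree_zero_of_not_mem_Wbad {t : Tree4} (ht : t ∉ Wbad) (hroot : t [] = .lor) :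
    subtree t [0] ∉ Wbad ∧ subtree t [0] [] = .lor := by
  exact ⟨fun h => ht (mem_Wbad_of_subtree ((isFormulaPath_nil t).append_of_lor hroot 0) h),
    left_eq_lor_of_not_mem_Wbad ht (isFormulaPath_nil t) hroot⟩

def Subformula (s t : Tree4) : Prop :=
  ∃ w, IsFormulaPath t (w ++ [1]) ∧ s = subtree t (w ++ [1])

theorem acc_subformula_of_not_mem_Wbad {t : Tree4} (ht : t ∉ Wbad) : Acc Subformula t := by
  by_contra hacc
  choose next hnext using fun s : {s // ¬ Acc Subformula s} => exists_not_acc_lt_of_not_acc s.2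
  let chain (n : ℕ) : {s // ¬ Acc Subformula s} :=
    Nat.rec ⟨t, hacc⟩ (fun _ s => ⟨next s, (hnext s).1⟩) n
  choose w hw hs using fun n => (hnext (chain n)).2
  let p (n : ℕ) : List (Fin 2) := Nat.rec [] (fun n acc => acc ++ (w n ++ [1])) n
  have hp (n : ℕ) : (chain n).1 = subtree t (p n) ∧ IsFormulaPath t (p n) := by
    induction n with
    | zero => exact ⟨rfl, isFormulaPath_nil t⟩
    | succ n ih =>
      refine ⟨(hs n).trans ?_, isFormulaPath_append.2 ⟨ih.2, ih.1 ▸ hw n⟩⟩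
      rw [ih.1, subtree_subtree]
  have hlen (n : ℕ) : n ≤ (p n).length := by
    induction n with
    | zero => exact Nat.zero_le _
    | succ n ih =>
      change n + 1 ≤ (p n ++ (w n ++ [1])).length
      simp only [List.length_append, List.length_singleton]
      omega
  obtain ⟨β, hβ⟩ := exists_pre_eq_of_prefix_chain (fun n => List.prefix_append _ _) hlen
  refine ht (mem_Wbad_iff.2 (.inl ⟨β, fun n => ?_, frequently_atTop.2 fun n => ?_⟩))
  · exact (hp n).2.of_prefix (hβ n ▸ pre_prefix_pre β (hlen n))
  · refine ⟨(p n ++ w n).length, by simp only [List.length_append]; have := hlen n; omega, ?_⟩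
    have h := hβ (n + 1)
    change pre β (p n ++ (w n ++ [1])).length = p n ++ (w n ++ [1]) at h
    rw [← List.append_assoc, List.length_append, List.length_singleton, pre_succ] at h
    simpa using (List.append_inj' h rfl).2

def formulaStates : Set QC := {.P, .N, .Pv, .Nv, .Tv, .TS}

theorem rankC_le_one_of_mem_formulaStates {q : QC} (hq : q ∈ formulaStates) : rankC q ≤ 1 := by
  simp only [formulaStates, Set.mem_insert_iff, Set.mem_singleton_iff] at hq
  rcases hq with rfl | rfl | rfl | rfl | rfl | rfl <;> decide

theorem deltaC_right_of_mem_formulaStates {q q₀ q₁ : QC} {a : A4} (hq : q ∈ formulaStates)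
    (ha : a = .lor ∨ a = .lneg) (h : deltaC q a q₀ q₁) : q₁ ∈ formulaStates ∧ rankC q₁ = 1 := by
  simp only [formulaStates, Set.mem_insert_iff, Set.mem_singleton_iff] at hq ⊢
  rcases hq with rfl | rfl | rfl | rfl | rfl | rfl <;> rcases ha with rfl | rfl <;>
    simp only [deltaC] at h <;> aesop

theorem deltaC_left_of_mem_formulaStates {q q₀ q₁ : QC} (hq : q ∈ formulaStates)
    (h : deltaC q .lor q₀ q₁) : q₀ = .Pv ∨ q₀ = .Nv ∨ q₀ = .Tv := by
  simp only [formulaStates, Set.mem_insert_iff, Set.mem_singleton_iff] at hq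
  rcases hq with rfl | rfl | rfl | rfl | rfl | rfl <;> simp only [deltaC] at h <;> aesop

theorem eq_lor_of_deltaC {q q₀ q₁ : QC} {a : A4} (hq : q = .Pv ∨ q = .Nv ∨ q = .Tv)
    (h : deltaC q a q₀ q₁) : a = .lor := by
  rcases hq with rfl | rfl | rfl <;> cases a <;> first | rfl | exact h.elim

theorem IsRunC.mem_formulaStates {t : Tree4} {q : QC} {ρ : List (Fin 2) → QC}
    (hρ : IsRunC t q ρ) (hq : q ∈ formulaStates) {v : List (Fin 2)} (hv : IsFormulaPath t v) :
    ρ v ∈ formulaStates := by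
  induction v using List.reverseRecOn with
  | nil => exact hρ.1 ▸ hq
  | append_singleton v d ih =>
    obtain ⟨hv, hl, hneg⟩ := isFormulaPath_append_singleton.1 hv
    have hF := ih hv
    rcases Fin.exists_fin_two.1 ⟨d, rfl⟩ with rfl | rfl
    · have hlor : t v = .lor := hl.resolve_right fun h => absurd (hneg h) (by decide)
      have := deltaC_left_of_mem_formulaStates hF (hlor ▸ hρ.2 v)
      simp only [formulaStates, Set.mem_insert_iff, Set.mem_singleton_iff]
      tauto
    · exact (deltaC_right_of_mem_formulaStates hF hl (hρ.2 v)).1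

theorem not_acceptsFrom_of_mem_Wbad {t : Tree4} (ht : t ∈ Wbad) {q : QC}
    (hq : q ∈ formulaStates) : ¬ AcceptsFrom q t := by
  rintro ⟨ρ, hρ, hpar⟩
  rcases mem_Wbad_iff.1 ht with ⟨β, hβ, hf⟩ | ⟨w, hw, hl, hne⟩
  · have hF (n : ℕ) := hρ.mem_formulaStates hq (hβ n)
    have hone : ∃ᶠ n in atTop, rankC (ρ (pre β n)) = 1 := by
      refine (frequently_atTop_add_iff (p := fun n => rankC (ρ (pre β n)) = 1) 1).1
        (hf.mono fun n hn => ?_)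
      have hl := (isFormulaPath_append_singleton.1 (pre_succ β n ▸ hβ (n + 1))).2.1
      have := deltaC_right_of_mem_formulaStates (hF n) hl (hρ.2 (pre β n))
      simpa [pre_succ, hn] using this.2
    have hzero := (parityOk_iff_eventually_eq_zero
      fun n => rankC_le_one_of_mem_formulaStates (hF n)).1 (hpar β)
    obtain ⟨n, h₁, h₀⟩ := (hone.and_eventually hzero).exists
    omega
  · have hF := hρ.mem_formulaStates hq (hw.of_prefix (List.prefix_append _ _))
    exact hne (eq_lor_of_deltaC (deltaC_left_of_mem_formulaStates hF (hl ▸ hρ.2 w))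
      (hρ.2 (w ++ [0])))

def nextT : QC → A4 → Fin 2 → QC
  | .Tv, .lor, d | .TS, .lor, d => if d = 0 then .Tv else .TS
  | .TS, .lneg, d => if d = 0 then .Top else .TS
  | _, _, _ => .Top

theorem nextT_Top (a : A4) (d : Fin 2) : nextT .Top a d = .Top := by
  cases a <;> rfl

theorem nextT_zero (q : QC) (a : A4) : nextT q a 0 = .Tv ∨ nextT q a 0 = .Top := by
  cases q <;> cases a <;> simp [nextT]

theorem deltaC_nextT {q : QC} {a : A4} (hq : q = .Tv ∧ a = .lor ∨ q = .TS ∨ q = .Top) :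
    deltaC q a (nextT q a 0) (nextT q a 1) := by
  rcases hq with ⟨rfl, rfl⟩ | rfl | rfl
  · simp [deltaC, nextT]
  all_goals cases a <;> simp [deltaC, nextT]

theorem nextT_ne_Top {q : QC} {a : A4} (hq : q = .Tv ∧ a = .lor ∨ q = .TS) {d : Fin 2}
    (h : nextT q a d ≠ .Top) : ((a = .lor ∨ a = .lneg) ∧ (a = .lneg → d = 1)) ∧
      (nextT q a d = .Tv ∧ a = .lor ∧ d = 0 ∨ nextT q a d = .TS) := by
  rcases hq with ⟨rfl, rfl⟩ | rfl
  · fin_cases d <;> simp_all [nextT]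
  · cases a <;> fin_cases d <;> simp_all [nextT]

theorem acceptsFrom_Tv {t : Tree4} (ht : t ∉ Wbad) (hroot : t [] = .lor) :
    AcceptsFrom .Tv t := by
  set σ := detRun nextT t .Tv
  have hσ (v : List (Fin 2)) (d : Fin 2) : σ (v ++ [d]) = nextT (σ v) (t v) d :=
    detRun_append_singleton _ _ _ _ _
  -- `Tv` has transitions only on `∨`; the run meets it only at left children of `∨`-nodes on
  -- formula paths, which are `∨`-nodes themselves since `t ∉ Wbad`.
  have hinv (v : List (Fin 2)) : σ v = .Top ∨
      (σ v = .Tv ∧ t v = .lor ∨ σ v = .TS) ∧ IsFormulaPath t v := by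
    induction v using List.reverseRecOn with
    | nil => exact .inr ⟨.inl ⟨rfl, hroot⟩, isFormulaPath_nil t⟩
    | append_singleton v d ih =>
      rw [hσ]
      rcases ih with h | ⟨hq, hv⟩
      · exact .inl (by rw [h, nextT_Top])
      by_cases hTop : nextT (σ v) (t v) d = .Top
      · exact .inl hTop
      obtain ⟨hl, ⟨hTv, hlor, rfl⟩ | hTS⟩ := nextT_ne_Top hq hTop
      · exact .inr ⟨.inl ⟨hTv, left_eq_lor_of_not_mem_Wbad ht hv hlor⟩,
          isFormulaPath_append_singleton.2 ⟨hv, hl⟩⟩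
      · exact .inr ⟨.inr hTS, isFormulaPath_append_singleton.2 ⟨hv, hl⟩⟩
  have hrank (v : List (Fin 2)) : rankC (σ v) ≤ 1 := by
    rcases hinv v with h | ⟨⟨h, -⟩ | h, -⟩ <;> rw [h] <;> decide
  refine ⟨σ, ⟨rfl, fun v => ?_⟩, fun β => ?_⟩
  · rw [hσ, hσ]
    rcases hinv v with h | ⟨h | h, -⟩
    exacts [deltaC_nextT (.inr (.inr h)), deltaC_nextT (.inl h), deltaC_nextT (.inr (.inl h))]
  · rw [parityOk_iff_eventually_eq_zero fun n => hrank _]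
    by_cases hf : ∃ᶠ n in atTop, β n = 1
    · have hTop : ∃ m, σ (pre β m) = .Top := by
        by_contra! h
        refine ht (mem_Wbad_iff.2 (.inl ⟨β, fun n => ?_, hf⟩))
        exact ((hinv _).resolve_left (h n)).2
      obtain ⟨m, hm⟩ := hTop
      refine (eventually_eq_of_absorbing (q := fun n => σ (pre β n)) (fun n h => ?_) hm).mono
        fun n h => by rw [h]; rfl
      rw [pre_succ, hσ, h, nextT_Top]
    · rw [not_frequently] at hf
      refine (eventually_atTop_add_iff (p := fun n => rankC (σ (pre β n)) = 0) 1).1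
        (hf.mono fun n hn => ?_)
      rw [pre_succ, hσ, show β n = 0 by omega]
      rcases nextT_zero (σ (pre β n)) (t (pre β n)) with h | h <;> rw [h] <;> rfl

/-! ### Acceptance from `P` and `N` -/

theorem acceptsFrom_P_iff_g1 {t : Tree4} (h : t [] = .la) :
    AcceptsFrom .P t ↔ AcceptsFrom .g1 t :=
  acceptsFrom_congr fun _ _ => by rw [h]; exact Iff.rfl

theorem acceptsFrom_N_iff_l1 {t : Tree4} (h : t [] = .la) :
    AcceptsFrom .N t ↔ AcceptsFrom .l1 t :=
  acceptsFrom_congr fun _ _ => by rw [h]; exact Iff.rfl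

theorem not_acceptsFrom_P_of_lb {t : Tree4} (h : t [] = .lb) : ¬ AcceptsFrom .P t := by
  rw [acceptsFrom_iff, h]
  rintro ⟨_, _, ⟨rfl, -⟩, h₀, -⟩
  exact not_acceptsFrom_bot1 _ h₀

theorem acceptsFrom_N_of_lb {t : Tree4} (h : t [] = .lb) : AcceptsFrom .N t :=
  acceptsFrom_iff.2 ⟨_, _, h ▸ ⟨rfl, rfl⟩, acceptsFrom_top0 _, acceptsFrom_top0 _⟩

theorem acceptsFrom_P_iff_of_lneg {t : Tree4} (h : t [] = .lneg) :
    AcceptsFrom .P t ↔ AcceptsFrom .N (subtree t [1]) := by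
  rw [acceptsFrom_iff, h]
  simp [deltaC, acceptsFrom_Top]

theorem acceptsFrom_N_iff_of_lneg {t : Tree4} (h : t [] = .lneg) :
    AcceptsFrom .N t ↔ AcceptsFrom .P (subtree t [1]) := by
  rw [acceptsFrom_iff, h]
  simp [deltaC, acceptsFrom_Top]

def disjunct (t : Tree4) (k : ℕ) : Tree4 := subtree t (List.replicate k 0 ++ [1])

theorem disjunct_subtree_zero (t : Tree4) (k : ℕ) :
    disjunct (subtree t [0]) k = disjunct t (k + 1) := by
  simp [disjunct, List.replicate_succ]

theorem acceptsFrom_N_iff_forall_disjunct {t : Tree4}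
    (hspine : ∀ k, t (List.replicate k 0) = .lor) :
    AcceptsFrom .N t ↔ ∀ k, AcceptsFrom .N (disjunct t k) := by
  constructor
  · rintro ⟨ρ, hρ⟩ k
    have hstep (k : ℕ) (hk : ρ (List.replicate k 0) = .N ∨ ρ (List.replicate k 0) = .Nv) :
        ρ (List.replicate (k + 1) 0) = .Nv ∧ ρ (List.replicate k 0 ++ [1]) = .N := by
      have hδ := hρ.1.2 (List.replicate k 0)
      rw [hspine k] at hδ
      rw [List.replicate_succ']
      rcases hk with h | h <;> rw [h] at hδ <;> exact hδ
    have hall (k : ℕ) : ρ (List.replicate k 0) = .N ∨ ρ (List.replicate k 0) = .Nv := by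
      induction k with
      | zero => exact .inl hρ.1.1
      | succ k ih => exact .inr (hstep k ih).1
    exact (hstep k (hall k)).2 ▸ hρ.acceptsFrom_subtree _
  · intro h
    let F : ℕ → QC
      | 0 => .N
      | _ + 1 => .Nv
    refine acceptsFrom_of_branch (F := F) (fun _ => 0) (fun _ => ![.Nv, .N]) (fun k => ?_)
      (fun _ => rfl) (fun k d hd => ?_) ?_
    · rw [pre_const, hspine]
      cases k <;> exact ⟨rfl, rfl⟩
    · rw [Fin.eq_one_of_ne_zero d hd, pre_const]
      exact h k
    · refine (parityOk_iff_eventually_eq_zero fun k => ?_).2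
        (eventually_atTop.2 ⟨1, fun k hk => ?_⟩)
      · rcases k with _ | k <;> simp [F, rankC]
      · obtain ⟨k, rfl⟩ := Nat.exists_eq_add_of_le' hk
        rfl

theorem exists_acceptsFrom_P_disjunct {t : Tree4} (hspine : ∀ k, t (List.replicate k 0) = .lor)
    (h : AcceptsFrom .P t) :
    ∃ k, AcceptsFrom .P (disjunct t k) ∧ ∀ j < k, AcceptsFrom .N (disjunct t j) := by
  classical
  obtain ⟨ρ, hρ⟩ := h
  have hstep (k : ℕ) (hk : ρ (List.replicate k 0) = .P ∨ ρ (List.replicate k 0) = .Pv) :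
      ρ (List.replicate (k + 1) 0) = .Pv ∧ ρ (List.replicate k 0 ++ [1]) = .N ∨
        ρ (List.replicate k 0 ++ [1]) = .P := by
    have hδ := hρ.1.2 (List.replicate k 0)
    rw [hspine k] at hδ
    rw [List.replicate_succ']
    rcases hk with h | h <;> rw [h] at hδ <;> rcases hδ with ⟨-, h₁⟩ | h₁
    all_goals tauto
  by_cases hex : ∃ k, ρ (List.replicate k 0 ++ [1]) = .P
  · have hP (j : ℕ) (hj : j ≤ Nat.find hex) :
        ρ (List.replicate j 0) = .P ∨ ρ (List.replicate j 0) = .Pv := by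
      induction j with
      | zero => exact .inl hρ.1.1
      | succ j ih =>
        exact .inr ((hstep j (ih (by omega))).resolve_right (Nat.find_min hex (by omega))).1
    have hsub (k : ℕ) {q : QC} (hq : ρ (List.replicate k 0 ++ [1]) = q) :
        AcceptsFrom q (disjunct t k) :=
      hq ▸ hρ.acceptsFrom_subtree _
    exact ⟨Nat.find hex, hsub _ (Nat.find_spec hex), fun j hj =>
      hsub j ((hstep j (hP j hj.le)).resolve_right (Nat.find_min hex hj)).2⟩
  · push Not at hex
    have hall (k : ℕ) : ρ (List.replicate k 0) = .P ∨ ρ (List.replicate k 0) = .Pv := by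
      induction k with
      | zero => exact .inl hρ.1.1
      | succ k ih => exact .inr ((hstep k ih).resolve_right (hex k)).1
    have := (hρ.2 fun _ => 0).even_of_eventually_eq (r := 1) (.of_forall fun n => by
      rw [pre_const]
      rcases hall n with h | h <;> rw [h] <;> rfl)
    exact absurd this (by decide)

theorem acceptsFrom_P_of_disjunct {t : Tree4} (ht : t ∉ Wbad) (hroot : t [] = .lor) {k : ℕ}
    (hk : AcceptsFrom .P (disjunct t k)) (hlt : ∀ j < k, AcceptsFrom .N (disjunct t j)) :
    AcceptsFrom .P t := by
  induction k generalizing t with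
  | zero =>
    obtain ⟨ht₀, hroot₀⟩ := subtree_zero_of_not_mem_Wbad ht hroot
    exact acceptsFrom_iff.2 ⟨.Tv, .P, by rw [hroot]; exact .inl ⟨rfl, rfl⟩,
      acceptsFrom_Tv ht₀ hroot₀, hk⟩
  | succ k ih =>
    obtain ⟨ht₀, hroot₀⟩ := subtree_zero_of_not_mem_Wbad ht hroot
    refine acceptsFrom_iff.2 ⟨.Pv, .N, by rw [hroot]; exact .inr ⟨rfl, rfl⟩, ?_, hlt 0 k.succ_pos⟩
    rw [acceptsFrom_congr (q' := .P) fun _ _ => by rw [hroot₀]; exact Iff.rfl]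
    refine ih ht₀ hroot₀ (by rwa [disjunct_subtree_zero]) fun j hj => ?_
    rw [disjunct_subtree_zero]
    exact hlt _ (by omega)

theorem acceptsFrom_P_iff_exists_disjunct {t : Tree4} (ht : t ∉ Wbad) (hroot : t [] = .lor) :
    AcceptsFrom .P t ↔
      ∃ k, AcceptsFrom .P (disjunct t k) ∧ ∀ j < k, AcceptsFrom .N (disjunct t j) :=
  ⟨exists_acceptsFrom_P_disjunct fun k => (lor_spine_of_not_mem_Wbad ht hroot k).2,
    fun ⟨_, hk, hlt⟩ => acceptsFrom_P_of_disjunct ht hroot hk hlt⟩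

theorem acceptsFrom_P_iff_not_acceptsFrom_N {t : Tree4} (ht : t ∉ Wbad) :
    AcceptsFrom .P t ↔ ¬ AcceptsFrom .N t := by
  induction acc_subformula_of_not_mem_Wbad ht with
  | intro t _ ih =>
    have ih' (w : List (Fin 2)) (hw : IsFormulaPath t (w ++ [1])) :
        AcceptsFrom .P (subtree t (w ++ [1])) ↔ ¬ AcceptsFrom .N (subtree t (w ++ [1])) :=
      ih _ ⟨w, hw, rfl⟩ fun h => ht (mem_Wbad_of_subtree hw h)
    cases hroot : t [] with
    | la =>
      rw [acceptsFrom_P_iff_g1 hroot, acceptsFrom_N_iff_l1 hroot, acceptsFrom_g1_iff,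
        acceptsFrom_l1_iff, not_not]
    | lb =>
      exact iff_of_false (not_acceptsFrom_P_of_lb hroot) (not_not.2 (acceptsFrom_N_of_lb hroot))
    | lneg =>
      have := ih' [] <|
        isFormulaPath_append_singleton.2 ⟨isFormulaPath_nil t, .inr hroot, fun _ => rfl⟩
      rw [acceptsFrom_P_iff_of_lneg hroot, acceptsFrom_N_iff_of_lneg hroot]
      tauto
    | lor =>
      have hspine := lor_spine_of_not_mem_Wbad ht hroot
      have hD (k : ℕ) : AcceptsFrom .P (disjunct t k) ↔ ¬ AcceptsFrom .N (disjunct t k) :=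
        ih' _ ((hspine k).1.append_of_lor (hspine k).2 1)
      rw [acceptsFrom_P_iff_exists_disjunct ht hroot,
        acceptsFrom_N_iff_forall_disjunct fun k => (hspine k).2]
      simp only [hD]
      exact exists_not_and_forall_lt_iff

/-- Partition lemma: no tree in `W` is accepted from `P` or from `N`, and every tree
outside `W` is accepted from exactly one of the states `P`, `N`. -/
theorem C_partition :
    (∀ t ∈ Wbad, ¬ AcceptsFrom QC.P t ∧ ¬ AcceptsFrom QC.N t) ∧
    (∀ t : Tree4, t ∉ Wbad → (AcceptsFrom QC.P t ↔ ¬ AcceptsFrom QC.N t)) :=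
  ⟨fun _ ht => ⟨not_acceptsFrom_of_mem_Wbad ht (by simp [formulaStates]),
      not_acceptsFrom_of_mem_Wbad ht (by simp [formulaStates])⟩,
    fun _ => acceptsFrom_P_iff_not_acceptsFrom_N⟩
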